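/- Suppose a ∈ ℝ is transcendental over ℚ. Then the quantized system with parameter a and input set U is ULI if and only if it is ULDI. -/

import Mathlib

/-!
ULDI implies ULI for every `a`: outputs with equal floors come from states less than one apart,
and the difference of two states is a trajectory of the difference system.

For the converse, suppose a difference trajectory `z` stays in `(-1, 1)` on a window
`m, …, m + k`. Starting the two systems at `z₀ + t` and `t`, their states at time `j` are
`a^j t + c_j + z_j` and `a^j t + c_j`. As `a` is transcendental, `a^m, …, a^(m+k)` are linearly
independent over `ℤ`, so Kronecker's theorem finds `t` with every `a^j t + c_j` close to
`(1 - z_j) / 2` modulo one; then both states have the same floor throughout the window.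

Kronecker's theorem is proved by Bohr's averaging argument. The kernel
`∏ i, ((1 + cos 2π(α_i t - θ_i)) / 2) ^ N` is a trigonometric polynomial whose only zero frequency,
by independence, carries the coefficient `(C(2N, N) / 4^N)^n`, so its mean over `[0, T]` tends to
that constant. If no `t` were good, the kernel would be bounded by `ρ^N` for some `ρ < 1`, and
`ρ^N < (C(2N, N) / 4^N)^n` for large `N`.
-/

noncomputable section

/-- State trajectory of the quantized system: x(0) = x₀, x(k) = a·x(k−1) + u(k). -/
def traj (a x₀ : ℝ) (u : ℕ → ℝ) : ℕ → ℝ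
  | 0 => x₀
  | k + 1 => a * traj a x₀ u k + u (k + 1)

/-- The input sequences u, u′ are uniformly distinguishable in k steps with waiting time l. -/
def UDist (a : ℝ) (k l : ℕ) (u u' : ℕ → ℝ) : Prop :=
  ∀ x₀ x₀' : ℝ, ∀ m : ℕ, m > l → u m ≠ u' m →
    ∃ j : ℕ, m ≤ j ∧ j ≤ m + k ∧ ⌊traj a x₀ u j⌋ ≠ ⌊traj a x₀' u' j⌋

/-- The system is uniformly left invertible in k steps. -/
def ULIin (a : ℝ) (U : Set ℝ) (k : ℕ) : Prop :=
  ∃ l : ℕ, ∀ u u' : ℕ → ℝ, (∀ i, u i ∈ U) → (∀ i, u' i ∈ U) → UDist a k l u u'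

/-- The system is uniformly left invertible. -/
def ULI (a : ℝ) (U : Set ℝ) : Prop := ∃ k, ULIin a U k

/-- The input sequences u, u′ are uniformly D-distinguishable in k steps with waiting time l. -/
def UDDist (a : ℝ) (k l : ℕ) (u u' : ℕ → ℝ) : Prop :=
  ∀ z₀ : ℝ, ∀ m : ℕ, m > l → u m - u' m ≠ 0 →
    ∃ j : ℕ, m ≤ j ∧ j ≤ m + k ∧ 1 ≤ |traj a z₀ (fun i => u i - u' i) j|

/-- The system is uniformly left D-invertible in k steps. -/
def ULDIin (a : ℝ) (U : Set ℝ) (k : ℕ) : Prop :=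
  ∃ l : ℕ, ∀ u u' : ℕ → ℝ, (∀ i, u i ∈ U) → (∀ i, u' i ∈ U) → UDDist a k l u u'

/-- The system is uniformly left D-invertible. -/
def ULDI (a : ℝ) (U : Set ℝ) : Prop := ∃ k, ULDIin a U k

/-- The set V = U − U of input differences. -/
def Vset (U : Set ℝ) : Set ℝ := {v | ∃ u ∈ U, ∃ u' ∈ U, v = u - u'}



theorem Transcendental.linearIndependent_pow {K A : Type*} [CommRing K] [CommRing A]
    [Algebra K A] {x : A} (hx : Transcendental K x) :
    LinearIndependent K fun n : ℕ => x ^ n := by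
  simpa [Function.comp_def] using (Polynomial.basisMonomials K).linearIndependent.map'
    (Polynomial.aeval x).toLinearMap (LinearMap.ker_eq_bot.mpr (transcendental_iff_injective.mp hx))

theorem Finset.prod_le_of_nonneg_of_le_one {β R : Type*} [CommMonoidWithZero R] [PartialOrder R]
    [ZeroLEOneClass R] [PosMulMono R] {s : Finset β} {f : β → R}
    (h0 : ∀ j ∈ s, 0 ≤ f j) (h1 : ∀ j ∈ s, f j ≤ 1) {i : β} (hi : i ∈ s) :
    ∏ j ∈ s, f j ≤ f i := by
  classical
  rw [← Finset.mul_prod_erase s f hi]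
  exact mul_le_of_le_one_right (h0 i hi) (Finset.prod_le_one
    (fun j hj => h0 j (Finset.mem_of_mem_erase hj)) fun j hj => h1 j (Finset.mem_of_mem_erase hj))

theorem Complex.one_add_cos_div_two_pow_eq_sum (y : ℂ) (N : ℕ) :
    ((1 + cos y) / 2) ^ N =
      ∑ k ∈ Finset.range (2 * N + 1), ((2 * N).choose k : ℂ) / 4 ^ N * exp (I * ((k - N) * y)) := by
  set w := exp (I * (y / 2))
  have hcos : (1 + cos y) / 2 = ((w + w⁻¹) / 2) ^ 2 := by
    have hw : w ^ 2 = exp (y * I) := by rw [← exp_nat_mul]; ring_nf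
    have hw' : w⁻¹ ^ 2 = exp (-y * I) := by rw [← exp_neg, ← exp_nat_mul]; ring_nf
    have := two_cos y
    rw [← hw, ← hw'] at this
    linear_combination (1 / 4) * this - (1 / 2) * mul_inv_cancel₀ (exp_ne_zero (I * (y / 2)))
  rw [hcos, ← pow_mul, div_pow, add_pow, Finset.sum_div]
  refine Finset.sum_congr rfl fun k hk => ?_
  have hk : k ≤ 2 * N := Nat.lt_succ_iff.mp (Finset.mem_range.mp hk)
  have hpow : w ^ k * w⁻¹ ^ (2 * N - k) = exp (I * ((k - N) * y)) := by
    rw [inv_pow, ← div_eq_mul_inv, ← exp_nat_mul, ← exp_nat_mul, ← exp_sub]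
    push_cast [Nat.cast_sub hk]
    ring_nf
  rw [← hpow, pow_mul]
  norm_num
  ring

theorem Complex.norm_integral_exp_mul_I_le {ω : ℝ} (hω : ω ≠ 0) (T : ℝ) :
    ‖∫ t in (0 : ℝ)..T, exp (ω * t * I)‖ ≤ 2 / |ω| := by
  have hωI : (ω : ℂ) * I ≠ 0 := mul_ne_zero (ofReal_ne_zero.mpr hω) I_ne_zero
  simp_rw [mul_right_comm (ω : ℂ) _ I]
  rw [integral_exp_mul_complex hωI, norm_div, norm_mul, norm_I, mul_one, norm_real,
    Real.norm_eq_abs]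
  gcongr
  calc ‖exp (ω * I * T) - exp (ω * I * 0)‖ ≤ ‖exp (ω * I * T)‖ + ‖exp (ω * I * 0)‖ :=
        norm_sub_le _ _
    _ = 2 := by
        rw [mul_right_comm, ← ofReal_mul, norm_exp_ofReal_mul_I]
        norm_num

theorem Complex.norm_integral_sum_exp_sub_le {β : Type*} (s : Finset β) (c : β → ℂ) (ω : β → ℝ)
    (T : ℝ) :
    ‖(∫ t in (0 : ℝ)..T, ∑ g ∈ s, c g * exp (ω g * t * I)) - T * ∑ g ∈ s with ω g = 0, c g‖
      ≤ ∑ g ∈ s with ω g ≠ 0, ‖c g‖ * (2 / |ω g|) := by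
  rw [intervalIntegral.integral_finsetSum fun g _ => by
    apply Continuous.intervalIntegrable; fun_prop]
  rw [← Finset.sum_filter_add_sum_filter_not s (fun g => ω g = 0), Finset.mul_sum]
  have hzero : ∀ g ∈ s.filter (ω · = 0), ∫ t in (0 : ℝ)..T, c g * exp (ω g * t * I) = T * c g := by
    intro g hg
    simp [(Finset.mem_filter.mp hg).2, mul_comm]
  rw [Finset.sum_congr rfl hzero, add_sub_cancel_left]
  refine (norm_sum_le _ _).trans (Finset.sum_le_sum fun g hg => ?_)
  rw [intervalIntegral.integral_const_mul, norm_mul]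
  exact mul_le_mul_of_nonneg_left
    (norm_integral_exp_mul_I_le (Finset.mem_filter.mp hg).2 T) (norm_nonneg _)

open Real Filter Topology

theorem cos_two_pi_mul_le_of_forall_le_abs_sub_int {x ε : ℝ} (hε : 0 ≤ ε)
    (hx : ∀ K : ℤ, ε ≤ |x - K|) : cos (2 * π * x) ≤ cos (2 * π * ε) := by
  have hround : cos (2 * π * x) = cos (2 * π * |x - round x|) := by
    rw [show 2 * π * x = 2 * π * (x - round x) + round x * (2 * π) by ring,
      cos_add_int_mul_two_pi, ← cos_abs, abs_mul, abs_of_pos two_pi_pos]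
  rw [hround]
  have := abs_sub_round x
  apply cos_le_cos_of_nonneg_of_le_pi (by positivity) (by nlinarith [pi_pos])
  exact mul_le_mul_of_nonneg_left (hx _) two_pi_pos.le

theorem cos_two_pi_mul_lt_one {ε : ℝ} (h0 : 0 < ε) (h1 : ε < 1) : cos (2 * π * ε) < 1 := by
  refine (cos_le_one _).lt_of_ne fun h => ?_
  rw [cos_eq_one_iff_of_lt_of_lt (by nlinarith [pi_pos]) (by nlinarith [pi_pos])] at h
  nlinarith [pi_pos]

theorem exists_pow_lt_choose_div_four_pow_pow {ρ : ℝ} (h0 : 0 ≤ ρ) (h1 : ρ < 1) (n : ℕ) :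
    ∃ N : ℕ, ρ ^ N < (((2 * N).choose N : ℝ) / 4 ^ N) ^ n := by
  have hlim : Tendsto (fun N : ℕ => 3 ^ n * ((N : ℝ) ^ n * ρ ^ N)) atTop (𝓝 0) := by
    simpa using (tendsto_pow_const_mul_const_pow_of_lt_one n h0 h1).const_mul ((3 : ℝ) ^ n)
  obtain ⟨N, hsmall, hN⟩ :=
    ((hlim.eventually_lt_const one_pos).and (eventually_ge_atTop 1)).exists
  refine ⟨N, ?_⟩
  have hN : (1 : ℝ) ≤ N := by exact_mod_cast hN
  have hcentral : (1 : ℝ) / (2 * N + 1) ≤ (2 * N).choose N / 4 ^ N := by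
    rw [div_le_div_iff₀ (by positivity) (by positivity), one_mul, mul_comm]
    exact_mod_cast Nat.four_pow_le_two_mul_add_one_mul_central_binom N
  calc ρ ^ N < 1 / (3 * N) ^ n := by
        rw [lt_div_iff₀ (by positivity), mul_pow]
        linarith
    _ ≤ (1 / (2 * N + 1)) ^ n := by
        rw [div_pow, one_pow]
        gcongr
        linarith
    _ ≤ _ := by gcongr

section Kronecker

variable {ι : Type*} [Fintype ι]

def bohrFactor (N : ℕ) (x : ℝ) : ℝ := ((1 + cos (2 * π * x)) / 2) ^ N

def bohrFreq (α : ι → ℝ) (N : ℕ) (g : ι → ℕ) : ℝ := 2 * π * ∑ i, ((g i : ℝ) - N) * α i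

def bohrCoeff (θ : ι → ℝ) (N : ℕ) (g : ι → ℕ) : ℂ :=
  ∏ i, ((2 * N).choose (g i) : ℂ) / 4 ^ N *
    Complex.exp (-(2 * π * ((g i : ℝ) - N) * θ i) * Complex.I)

theorem bohrFactor_nonneg (N : ℕ) (x : ℝ) : 0 ≤ bohrFactor N x :=
  pow_nonneg (by linarith [neg_one_le_cos (2 * π * x)]) N

theorem bohrFactor_le_one (N : ℕ) (x : ℝ) : bohrFactor N x ≤ 1 :=
  pow_le_one₀ (by linarith [neg_one_le_cos (2 * π * x)]) (by linarith [cos_le_one (2 * π * x)])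

theorem bohrFactor_le_of_forall_le_abs_sub_int (N : ℕ) {x ε : ℝ} (hε : 0 ≤ ε)
    (hx : ∀ K : ℤ, ε ≤ |x - K|) : bohrFactor N x ≤ ((1 + cos (2 * π * ε)) / 2) ^ N := by
  apply pow_le_pow_left₀ (by linarith [neg_one_le_cos (2 * π * x)])
  linarith [cos_two_pi_mul_le_of_forall_le_abs_sub_int hε hx]

theorem ofReal_prod_bohrFactor_eq_sum [DecidableEq ι] (α θ : ι → ℝ) (N : ℕ) (t : ℝ) :
    ((∏ i, bohrFactor N (α i * t - θ i) : ℝ) : ℂ) =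
      ∑ g ∈ Fintype.piFinset fun _ => Finset.range (2 * N + 1),
        bohrCoeff θ N g * Complex.exp (bohrFreq α N g * t * Complex.I) := by
  simp only [bohrFactor, Complex.ofReal_prod, Complex.ofReal_pow, Complex.ofReal_div,
    Complex.ofReal_add, Complex.ofReal_one, Complex.ofReal_cos, Complex.ofReal_ofNat,
    Complex.one_add_cos_div_two_pow_eq_sum]
  rw [Finset.prod_univ_sum]
  refine Finset.sum_congr rfl fun g _ => ?_
  rw [bohrCoeff, bohrFreq, Finset.mul_sum, Complex.ofReal_sum, Finset.sum_mul, Finset.sum_mul,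
    Complex.exp_sum, ← Finset.prod_mul_distrib]
  refine Finset.prod_congr rfl fun i _ => ?_
  rw [mul_assoc (_ / _ : ℂ), ← Complex.exp_add]
  push_cast
  ring_nf

theorem bohrFreq_eq_zero_iff {α : ι → ℝ} (hα : LinearIndependent ℤ α) {N : ℕ} {g : ι → ℕ} :
    bohrFreq α N g = 0 ↔ g = fun _ => N := by
  rw [bohrFreq, mul_eq_zero, or_iff_right two_pi_pos.ne', funext_iff]
  constructor
  · intro h i
    have := Fintype.linearIndependent_iff.mp hα (fun i => (g i : ℤ) - N) (by simpa using h) i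
    omega
  · intro h
    simp [h]

theorem bohrCoeff_const (θ : ι → ℝ) (N : ℕ) :
    bohrCoeff θ N (fun _ => N) = ((((2 * N).choose N : ℝ) / 4 ^ N) ^ Fintype.card ι : ℝ) := by
  simp [bohrCoeff, div_pow]

theorem exists_le_integral_prod_bohrFactor {α : ι → ℝ} (hα : LinearIndependent ℤ α)
    (θ : ι → ℝ) (N : ℕ) : ∃ B : ℝ, ∀ T : ℝ,
      (((2 * N).choose N : ℝ) / 4 ^ N) ^ Fintype.card ι * T - B ≤
        ∫ t in (0 : ℝ)..T, ∏ i, bohrFactor N (α i * t - θ i) := by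
  classical
  let G := Fintype.piFinset fun _ : ι => Finset.range (2 * N + 1)
  have hzero : G.filter (bohrFreq α N · = 0) = {fun _ => N} := by
    ext g
    rw [Finset.mem_filter, Finset.mem_singleton, bohrFreq_eq_zero_iff hα]
    exact and_iff_right_of_imp fun h =>
      h ▸ Fintype.mem_piFinset.mpr fun _ => Finset.mem_range.mpr (by omega)
  refine ⟨∑ g ∈ G with bohrFreq α N g ≠ 0, ‖bohrCoeff θ N g‖ * (2 / |bohrFreq α N g|),
    fun T => ?_⟩
  have key := Complex.norm_integral_sum_exp_sub_le G (bohrCoeff θ N) (bohrFreq α N) T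
  rw [hzero, Finset.sum_singleton, bohrCoeff_const] at key
  simp_rw [G, ← ofReal_prod_bohrFactor_eq_sum, intervalIntegral.integral_ofReal,
    ← Complex.ofReal_mul, ← Complex.ofReal_sub, Complex.norm_real, Real.norm_eq_abs] at key
  linarith [(abs_le.mp key).1]

/-- Kronecker's theorem. -/
theorem exists_forall_abs_mul_sub_sub_int_lt {α : ι → ℝ} (hα : LinearIndependent ℤ α)
    (θ : ι → ℝ) {ε : ℝ} (hε : 0 < ε) : ∃ t : ℝ, ∀ i, ∃ K : ℤ, |α i * t - θ i - K| < ε := by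
  by_contra! hfar
  set δ := min ε (1 / 2)
  have hδ : 0 < δ := lt_min hε one_half_pos
  set ρ := (1 + cos (2 * π * δ)) / 2 with hρ
  have hρ0 : 0 ≤ ρ := by rw [hρ]; linarith [neg_one_le_cos (2 * π * δ)]
  have hρ1 : ρ < 1 := by
    rw [hρ]
    linarith [cos_two_pi_mul_lt_one hδ ((min_le_right ε _).trans_lt one_half_lt_one)]
  obtain ⟨N, hN⟩ := exists_pow_lt_choose_div_four_pow_pow hρ0 hρ1 (Fintype.card ι)
  set w := (((2 * N).choose N : ℝ) / 4 ^ N) ^ Fintype.card ι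
  obtain ⟨B, hB⟩ := exists_le_integral_prod_bohrFactor hα θ N
  have hF : ∀ t, ∏ i, bohrFactor N (α i * t - θ i) ≤ ρ ^ N := fun t => by
    obtain ⟨i, hi⟩ := hfar t
    calc ∏ j, bohrFactor N (α j * t - θ j) ≤ bohrFactor N (α i * t - θ i) :=
          Finset.prod_le_of_nonneg_of_le_one (fun j _ => bohrFactor_nonneg N _)
            (fun j _ => bohrFactor_le_one N _) (Finset.mem_univ i)
      _ ≤ ρ ^ N := bohrFactor_le_of_forall_le_abs_sub_int N hδ.le fun K =>
          (min_le_left _ _).trans (by simpa [sub_sub] using hi K)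
  set T := (B + 1) / (w - ρ ^ N)
  have hT : T * (w - ρ ^ N) = B + 1 := div_mul_cancel₀ _ (sub_pos.mpr hN).ne'
  have hupper : ∫ t in (0 : ℝ)..T, ∏ i, bohrFactor N (α i * t - θ i) ≤ ρ ^ N * T := by
    have hB0 : 0 ≤ B := by simpa using hB 0
    have hT0 : 0 ≤ T := div_nonneg (by linarith) (sub_pos.mpr hN).le
    have hcont : Continuous fun t => ∏ i, bohrFactor N (α i * t - θ i) := by
      unfold bohrFactor; fun_prop
    calc ∫ t in (0 : ℝ)..T, ∏ i, bohrFactor N (α i * t - θ i) ≤ ∫ _ in (0 : ℝ)..T, ρ ^ N :=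
          intervalIntegral.integral_mono_on hT0 (hcont.intervalIntegrable _ _)
            intervalIntegrable_const fun t _ => hF t
      _ = ρ ^ N * T := by simp [mul_comm]
  linarith [hB T]

theorem exists_floor_eq_floor_add {α : ι → ℝ} (hα : LinearIndependent ℤ α) (c z : ι → ℝ)
    (hz : ∀ i, |z i| < 1) : ∃ t : ℝ, ∀ i, ⌊α i * t + c i⌋ = ⌊α i * t + c i + z i⌋ := by
  have hsmall : ∀ᶠ ε in 𝓝[>] (0 : ℝ), ∀ i, ε < (1 - |z i|) / 2 :=
    eventually_all.2 fun i =>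
      (eventually_lt_nhds (by linarith [hz i])).filter_mono nhdsWithin_le_nhds
  obtain ⟨ε, hε, hε0⟩ := (hsmall.and self_mem_nhdsWithin).exists
  obtain ⟨t, ht⟩ := exists_forall_abs_mul_sub_sub_int_lt hα (fun i => (1 - z i) / 2 - c i) hε0
  refine ⟨t, fun i => ?_⟩
  obtain ⟨K, hK⟩ := ht i
  -- `α i * t + c i` is within `ε` of `K + (1 - z i) / 2`, so it and its shift by `z i`
  -- both lie in `[K, K + 1)`.
  have := abs_lt.mp hK
  have := hε i
  have := le_abs_self (z i)
  have := neg_abs_le (z i)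
  have h₁ : ⌊α i * t + c i⌋ = K := Int.floor_eq_iff.mpr ⟨by linarith, by linarith⟩
  have h₂ : ⌊α i * t + c i + z i⌋ = K := Int.floor_eq_iff.mpr ⟨by linarith, by linarith⟩
  rw [h₁, h₂]

end Kronecker

theorem traj_sub (a x₀ x₀' : ℝ) (u u' : ℕ → ℝ) (j : ℕ) :
    traj a x₀ u j - traj a x₀' u' j = traj a (x₀ - x₀') (fun i => u i - u' i) j := by
  induction j with
  | zero => rfl
  | succ j ih => simp only [traj, ← ih]; ring

theorem traj_eq_pow_mul_add (a x₀ : ℝ) (u : ℕ → ℝ) (j : ℕ) :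
    traj a x₀ u j = a ^ j * x₀ + traj a 0 u j := by
  induction j with
  | zero => simp [traj]
  | succ j ih => simp only [traj, ih]; ring

theorem uDist_of_uDDist {a : ℝ} {k l : ℕ} {u u' : ℕ → ℝ} (h : UDDist a k l u u') :
    UDist a k l u u' := by
  intro x₀ x₀' m hm hne
  obtain ⟨j, hmj, hjk, hj⟩ := h (x₀ - x₀') m hm (sub_ne_zero.mpr hne)
  refine ⟨j, hmj, hjk, fun hfloor => ?_⟩
  have := Int.abs_sub_lt_one_of_floor_eq_floor hfloor
  rw [traj_sub] at this
  linarith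

theorem uDDist_of_uDist {a : ℝ} (ha : Transcendental ℚ a) {k l : ℕ} {u u' : ℕ → ℝ}
    (h : UDist a k l u u') : UDDist a k l u u' := by
  intro z₀ m hm hv
  by_contra! hsmall
  have hind : LinearIndependent ℤ fun i : Fin (k + 1) => a ^ (m + (i : ℕ)) :=
    (ha.linearIndependent_pow.restrict_scalars' ℤ).comp _ fun i i' hi =>
      Fin.ext (Nat.add_left_cancel hi)
  obtain ⟨t, ht⟩ := exists_floor_eq_floor_add hind (fun i => traj a 0 u' (m + i))
    (fun i => traj a z₀ (fun i => u i - u' i) (m + i)) fun i => hsmall _ (by omega) (by omega)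
  obtain ⟨j, hmj, hjk, hne⟩ := h (z₀ + t) t m hm (sub_ne_zero.mp hv)
  have hj := ht ⟨j - m, by omega⟩
  simp only [Nat.add_sub_cancel' hmj] at hj
  have hdiff := traj_sub a (z₀ + t) t u u' j
  rw [add_sub_cancel_right] at hdiff
  apply hne
  rw [sub_eq_iff_eq_add'.mp hdiff, traj_eq_pow_mul_add a t u' j]
  exact hj.symm

theorem uLIin_iff_uLDIin {a : ℝ} (ha : Transcendental ℚ a) {U : Set ℝ} {k : ℕ} :
    ULIin a U k ↔ ULDIin a U k :=
  ⟨fun ⟨l, h⟩ => ⟨l, fun u u' hu hu' => uDDist_of_uDist ha (h u u' hu hu')⟩,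
    fun ⟨l, h⟩ => ⟨l, fun u u' hu hu' => uDist_of_uDDist (h u u' hu hu')⟩⟩

theorem stmt8_general (a : ℝ) (U : Set ℝ)
    (htr : Transcendental ℚ a) :
    ULI a U ↔ ULDI a U :=
  exists_congr fun _ => uLIin_iff_uLDIin htr

/-- if a is transcendental over ℚ, then the system is ULI iff it is ULDI. -/
theorem stmt8 (a : ℝ) (U : Set ℝ) (hfin : U.Finite) (hnt : U.Nontrivial)
    (htr : Transcendental ℚ a) :
    ULI a U ↔ ULDI a U :=
  stmt8_general a U htr
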